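/- arXiv:1712.08087 — 3 statements merged into one kernel-verified Lean document; each statement's English description precedes it below -/
import Mathlib

section
/- Let t_V, t_D ≥ 0 and let q_1, …, q_n ∈ [0,1] with q_1 ≤ q_2 ≤ … ≤ q_n. Then for every m ∈ {0, …, n} and every sequence (q_{i_1}, …, q_{i_m}) obtained from pairwise distinct indices i_1, …, i_m ∈ {1, …, n}, one has T(q_1, …, q_m) ≤ T(q_{i_1}, …, q_{i_m}); that is, the minimal expected episode duration over all choices of m distinct boxes and their order is attained by the m boxes of smallest rejection probability arranged in increasing order of rejection probability. -/
/-- Expected episode duration: `expDur tV tD [q₁, …, qₘ]` is the expected annotation time of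
the strategy `VᵐD` that verifies boxes with rejection probabilities `q₁, …, qₘ` in order
(each verification taking time `tV`) and draws manually (taking time `tD`) if all are
rejected: `expDur tV tD [] = tD` and `expDur tV tD (q :: qs) = tV + q * expDur tV tD qs`. -/
noncomputable def expDur (tV tD : ℝ) : List ℝ → ℝ
  | [] => tD
  | q :: qs => tV + q * expDur tV tD qs

/-!
Swapping two adjacent boxes with rejection probabilities `a ≤ b` into increasing order changes
the expected duration by `(a - b) * tV ≤ 0`, so sorting the chosen sequence does not increase it.
The `j`-th smallest of the chosen (distinct) indices is at least `j`, and the expected duration is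
monotone in every (nonnegative) rejection probability, so replacing the sorted chosen sequence by
`q_0, …, q_{m-1}` does not increase it either.
-/

theorem List.SortedLT.le_getElem {s : List ℕ} (hs : s.SortedLT) {j : ℕ}
    (hj : j < s.length) : j ≤ s[j] := by
  induction j with
  | zero => exact Nat.zero_le _
  | succ j ih =>
    exact (ih (by omega)).trans_lt (hs.getElem_lt_getElem_of_lt (Nat.lt_succ_self j))

section
variable {tV tD : ℝ}

theorem expDur_nonneg (htV : 0 ≤ tV) (htD : 0 ≤ tD) :
    ∀ {l : List ℝ}, (∀ x ∈ l, 0 ≤ x) → 0 ≤ expDur tV tD l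
  | [], _ => htD
  | _ :: _, hl => by
    rw [List.forall_mem_cons] at hl
    exact add_nonneg htV (mul_nonneg hl.1 (expDur_nonneg htV htD hl.2))

theorem expDur_cons_le_cons {x : ℝ} (hx : 0 ≤ x) {l₁ l₂ : List ℝ}
    (h : expDur tV tD l₁ ≤ expDur tV tD l₂) : expDur tV tD (x :: l₁) ≤ expDur tV tD (x :: l₂) := by
  simp only [expDur]
  gcongr

theorem expDur_le_of_forall₂ (htV : 0 ≤ tV) (htD : 0 ≤ tD) {l₁ l₂ : List ℝ}
    (h : List.Forall₂ (· ≤ ·) l₁ l₂) (hl₁ : ∀ x ∈ l₁, 0 ≤ x) :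
    expDur tV tD l₁ ≤ expDur tV tD l₂ := by
  induction h with
  | nil => exact le_rfl
  | @cons a b l₁ l₂ hab _ ih =>
    rw [List.forall_mem_cons] at hl₁
    have hE := expDur_nonneg htV htD hl₁.2
    calc expDur tV tD (a :: l₁) ≤ expDur tV tD (b :: l₁) := by
          simp only [expDur]
          gcongr
      _ ≤ expDur tV tD (b :: l₂) := expDur_cons_le_cons (hl₁.1.trans hab) (ih hl₁.2)

theorem expDur_cons_cons_le_swap (htV : 0 ≤ tV) {a b : ℝ} (hab : a ≤ b) (l : List ℝ) :
    expDur tV tD (a :: b :: l) ≤ expDur tV tD (b :: a :: l) := by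
  simp only [expDur]
  linear_combination mul_le_mul_of_nonneg_right hab htV

theorem expDur_orderedInsert_le (htV : 0 ≤ tV) (a : ℝ) :
    ∀ {l : List ℝ}, (∀ x ∈ l, 0 ≤ x) →
      expDur tV tD (l.orderedInsert (· ≤ ·) a) ≤ expDur tV tD (a :: l)
  | [], _ => le_rfl
  | b :: l, hl => by
    rw [List.forall_mem_cons] at hl
    by_cases hab : a ≤ b
    · rw [List.orderedInsert_cons_of_le _ l hab]
    · rw [List.orderedInsert_of_not_le _ l hab]
      calc expDur tV tD (b :: l.orderedInsert (· ≤ ·) a) ≤ expDur tV tD (b :: a :: l) :=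
            expDur_cons_le_cons hl.1 (expDur_orderedInsert_le htV a hl.2)
        _ ≤ expDur tV tD (a :: b :: l) := expDur_cons_cons_le_swap htV (le_of_not_ge hab) l

theorem expDur_insertionSort_le (htV : 0 ≤ tV) :
    ∀ {l : List ℝ}, (∀ x ∈ l, 0 ≤ x) → expDur tV tD (l.insertionSort (· ≤ ·)) ≤ expDur tV tD l
  | [], _ => le_rfl
  | a :: l, hl => by
    rw [List.forall_mem_cons] at hl
    calc expDur tV tD ((a :: l).insertionSort (· ≤ ·))
        = expDur tV tD ((l.insertionSort (· ≤ ·)).orderedInsert (· ≤ ·) a) := rfl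
      _ ≤ expDur tV tD (a :: l.insertionSort (· ≤ ·)) :=
          expDur_orderedInsert_le htV a fun x hx => hl.2 x ((List.mem_insertionSort _).1 hx)
      _ ≤ expDur tV tD (a :: l) := expDur_cons_le_cons hl.1 (expDur_insertionSort_le htV hl.2)

theorem expDur_le_of_perm_of_sortedLE (htV : 0 ≤ tV) {l l' : List ℝ} (hperm : l'.Perm l)
    (hsorted : l'.SortedLE) (hl : ∀ x ∈ l, 0 ≤ x) : expDur tV tD l' ≤ expDur tV tD l := by
  rw [(hperm.trans (List.perm_insertionSort _ l).symm).eq_of_sortedLE hsorted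
    List.sortedLE_insertionSort]
  exact expDur_insertionSort_le htV hl


theorem expDur_map_range_le_map_of_nodup (htV : 0 ≤ tV) (htD : 0 ≤ tD) {n : ℕ} {q : ℕ → ℝ}
    (hq : ∀ i < n, 0 ≤ q i) (hmono : ∀ i j, i ≤ j → j < n → q i ≤ q j) {s : List ℕ}
    (hs : s.Nodup) (hsn : ∀ i ∈ s, i < n) :
    expDur tV tD ((List.range s.length).map q) ≤ expDur tV tD (s.map q) := by
  set t := s.insertionSort (· ≤ ·)
  have hperm : t.Perm s := List.perm_insertionSort _ s
  have ht : t.SortedLT := List.sortedLE_insertionSort.sortedLT_of_nodup (hperm.nodup_iff.2 hs)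
  have htn : ∀ i ∈ t, i < n := fun i hi => hsn i (hperm.mem_iff.1 hi)
  have hle : ∀ j (hj : j < t.length), j ≤ t[j] ∧ t[j] < n := fun j hj =>
    ⟨ht.le_getElem hj, htn _ (List.getElem_mem hj)⟩
  have hlen : t.length = s.length := List.length_insertionSort _ s
  calc expDur tV tD ((List.range s.length).map q) ≤ expDur tV tD (t.map q) := by
        refine expDur_le_of_forall₂ htV htD ?_ ?_
        · refine List.forall₂_iff_get.2 ⟨by simp [hlen], fun j h₁ h₂ => ?_⟩
          simp only [List.length_map, List.length_range] at h₁
          have := hle j (hlen ▸ h₁)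
          simpa using hmono _ _ this.1 this.2
        · simp only [List.mem_map, List.mem_range, forall_exists_index, and_imp]
          rintro _ j hj rfl
          have := hle j (hlen ▸ hj)
          exact hq j (this.1.trans_lt this.2)
    _ ≤ expDur tV tD (s.map q) := by
        refine expDur_le_of_perm_of_sortedLE htV (hperm.map q) ?_ ?_
        · rw [List.sortedLE_iff_pairwise, List.pairwise_map]
          exact ht.sortedLE.pairwise.imp_of_mem fun _ hb hab => hmono _ _ hab (htn _ hb)
        · simp only [List.mem_map, forall_exists_index, and_imp]
          rintro _ i hi rfl
          exact hq i (hsn i hi)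

end

theorem expDur_prefix_min_general (tV tD : ℝ) (htV : 0 ≤ tV) (htD : 0 ≤ tD)
    (n : ℕ) (q : ℕ → ℝ)
    (hq : ∀ i < n, 0 ≤ q i ∧ q i ≤ 1)
    (hsorted : ∀ i j, i ≤ j → j < n → q i ≤ q j)
    (m : ℕ)
    (idx : Fin m → ℕ) (hinj : Function.Injective idx) (hidx : ∀ j, idx j < n) :
    expDur tV tD ((List.range m).map q)
      ≤ expDur tV tD (List.ofFn fun j => q (idx j)) := by
  have h := expDur_map_range_le_map_of_nodup htV htD (fun i hi => (hq i hi).1) hsorted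
    (List.nodup_ofFn.2 hinj) (s := List.ofFn idx) (by simpa [List.mem_ofFn] using hidx)
  simpa [List.map_ofFn, Function.comp_def] using h

/-- If `q_0 ≤ q_1 ≤ … ≤ q_{n-1}`, then for every `m ≤ n` and every choice of `m` pairwise
distinct indices, the expected duration of verifying the `m` smallest rejection
probabilities in increasing order is at most that of the chosen sequence. -/
theorem expDur_prefix_min (tV tD : ℝ) (htV : 0 ≤ tV) (htD : 0 ≤ tD)
    (n : ℕ) (q : ℕ → ℝ)
    (hq : ∀ i < n, 0 ≤ q i ∧ q i ≤ 1)
    (hsorted : ∀ i j, i ≤ j → j < n → q i ≤ q j)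
    (m : ℕ) (hm : m ≤ n)
    (idx : Fin m → ℕ) (hinj : Function.Injective idx) (hidx : ∀ j, idx j < n) :
    expDur tV tD ((List.range m).map q)
      ≤ expDur tV tD (List.ofFn fun j => q (idx j)) :=
  expDur_prefix_min_general tV tD htV htD n q hq hsorted m idx hinj hidx
end

section
/- Let t_V ≥ 0, t_D > 0, and let q_1, …, q_m ∈ [0,1] with m ≥ 1, and write p_m = 1 − q_m for the acceptance probability of the m-th box. If p_m > t_V / t_D then T(q_1, …, q_m) ≤ T(q_1, …, q_{m-1}), i.e., adding the m-th verification does not increase the expected episode duration; and if p_m ≤ t_V / t_D then T(q_1, …, q_m) ≥ T(q_1, …, q_{m-1}). -/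
theorem expDur_append (tV tD : ℝ) (A B : List ℝ) :
    expDur tV tD (A ++ B) = expDur tV tD A + A.prod * (expDur tV tD B - tD) := by
  induction A with
  | nil => simp [expDur]
  | cons q A ih =>
    simp only [List.cons_append, expDur, List.prod_cons, ih]
    ring

theorem expDur_append_singleton (tV tD : ℝ) (A : List ℝ) (x : ℝ) :
    expDur tV tD (A ++ [x]) = expDur tV tD A + A.prod * (tV - (1 - x) * tD) := by
  rw [expDur_append]
  simp only [expDur]
  ring

theorem expDur_last_verification_general (tV tD : ℝ) (htD : 0 < tD)
    (A : List ℝ) (x : ℝ)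
    (hA : ∀ q ∈ A, 0 ≤ q ∧ q ≤ 1) :
    (tV / tD < 1 - x → expDur tV tD (A ++ [x]) ≤ expDur tV tD A) ∧
    (1 - x ≤ tV / tD → expDur tV tD A ≤ expDur tV tD (A ++ [x])) := by
  have hprod : 0 ≤ A.prod := List.prod_nonneg fun q hq => (hA q hq).1
  rw [div_lt_iff₀ htD, le_div_iff₀ htD, expDur_append_singleton]
  constructor
  · intro h
    exact add_le_of_nonpos_right (mul_nonpos_of_nonneg_of_nonpos hprod (by linarith))
  · intro h
    exact le_add_of_nonneg_right (mul_nonneg hprod (by linarith))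

/-- With acceptance probability `p_m = 1 - q_m` of the last box: if `p_m > t_V / t_D` then
adding the `m`-th verification does not increase the expected duration, and if
`p_m ≤ t_V / t_D` then it does not decrease it. -/
theorem expDur_last_verification (tV tD : ℝ) (htV : 0 ≤ tV) (htD : 0 < tD)
    (A : List ℝ) (x : ℝ)
    (hA : ∀ q ∈ A, 0 ≤ q ∧ q ≤ 1) (hx : 0 ≤ x ∧ x ≤ 1) :
    (tV / tD < 1 - x → expDur tV tD (A ++ [x]) ≤ expDur tV tD A) ∧
    (1 - x ≤ tV / tD → expDur tV tD A ≤ expDur tV tD (A ++ [x])) :=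
  expDur_last_verification_general tV tD htD A x hA
end

section
/- Let 0 ≤ t_V ≤ t_D with t_D > 0, and let q_1, …, q_n ∈ [0,1] with q_1 ≤ … ≤ q_n, and let k be the number of indices i with 1 − q_i > t_V / t_D. Then T(q_1, …, q_k) ≤ t_D and T(q_1, …, q_k) ≤ T(q_1, …, q_n); that is, the expected annotation time of the threshold strategy is at most that of the drawing-only strategy D and at most that of the exhaustive verification strategy V^n D. -/
/-!
Verifying a box with rejection probability `q ≥ 0` turns the expected remaining time `y`
into `tV + q * y`, a monotone map. It moves `tD` strictly down exactly when
`tV + q * tD < tD`, i.e. `1 - q > tV / tD`, and by sortedness these are the first `k` boxes.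
So the maps of the first `k` boxes preserve `(-∞, tD]`, which gives the first bound, and
those of the other boxes preserve `[tD, ∞)`; hence the tail of `VⁿD` after the first `k`
boxes takes at least `tD`, and monotonicity gives the second bound.
-/

open Finset

section expDur

variable {tV x y : ℝ} {l : List ℝ}

theorem expDur_append_s11 (tV tD : ℝ) (l l' : List ℝ) :
    expDur tV tD (l ++ l') = expDur tV (expDur tV tD l') l := by
  induction l with
  | nil => rfl
  | cons a l ih => simp only [List.cons_append, expDur, ih]

theorem expDur_le_expDur_of_le (hxy : x ≤ y) (hl : ∀ a ∈ l, 0 ≤ a) :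
    expDur tV x l ≤ expDur tV y l := by
  induction l with
  | nil => exact hxy
  | cons a l ih =>
    obtain ⟨ha, hl⟩ := List.forall_mem_cons.1 hl
    simp only [expDur]
    gcongr
    exact ih hl

theorem expDur_le_of_forall_mem (hl : ∀ a ∈ l, 0 ≤ a) (h : ∀ a ∈ l, tV + a * x ≤ x) :
    expDur tV x l ≤ x := by
  induction l with
  | nil => exact le_rfl
  | cons a l ih =>
    obtain ⟨ha, hl⟩ := List.forall_mem_cons.1 hl
    obtain ⟨hax, h⟩ := List.forall_mem_cons.1 h
    calc tV + a * expDur tV x l ≤ tV + a * x := by gcongr; exact ih hl h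
      _ ≤ x := hax

theorem le_expDur_of_forall_mem (hl : ∀ a ∈ l, 0 ≤ a) (h : ∀ a ∈ l, x ≤ tV + a * x) :
    x ≤ expDur tV x l := by
  induction l with
  | nil => exact le_rfl
  | cons a l ih =>
    obtain ⟨ha, hl⟩ := List.forall_mem_cons.1 hl
    obtain ⟨hax, h⟩ := List.forall_mem_cons.1 h
    calc x ≤ tV + a * x := hax
      _ ≤ tV + a * expDur tV x l := by gcongr; exact ih hl h

end expDur

theorem lt_card_filter_range_iff {p : ℕ → Prop} [DecidablePred p] {n i : ℕ}
    (hp : ∀ i j, i ≤ j → j < n → p j → p i) (hi : i < n) :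
    i < #{j ∈ range n | p j} ↔ p i := by
  constructor
  · intro hlt
    by_contra hpi
    have hsub : {j ∈ range n | p j} ⊆ range i := fun j hj => by
      rw [mem_filter, mem_range] at hj
      exact mem_range.2 (lt_of_not_ge fun hij => hpi (hp i j hij hj.1 hj.2))
    exact absurd (card_le_card hsub) (by rw [card_range]; omega)
  · intro hpi
    have hsub : range (i + 1) ⊆ {j ∈ range n | p j} := fun j hj => by
      rw [mem_range] at hj
      exact mem_filter.2 ⟨mem_range.2 (by omega), hp j i (by omega) hi hpi⟩
    simpa using card_le_card hsub

theorem iadProb_le_standard_general (tV tD : ℝ) (htD : 0 < tD)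
    (n : ℕ) (q : ℕ → ℝ)
    (hq : ∀ i < n, 0 ≤ q i ∧ q i ≤ 1)
    (hsorted : ∀ i j, i ≤ j → j < n → q i ≤ q j)
    (k : ℕ) (hk : k = ((Finset.range n).filter fun i => tV / tD < 1 - q i).card) :
    expDur tV tD ((List.range k).map q) ≤ tD ∧
    expDur tV tD ((List.range k).map q) ≤ expDur tV tD ((List.range n).map q) := by
  have hkn : k ≤ n := hk ▸ (card_filter_le _ _).trans (card_range n).le
  have hthreshold : ∀ i < n, i < k ↔ tV + q i * tD < tD := fun i hi => by
    rw [hk, lt_card_filter_range_iff (fun i j hij hjn h => by linarith [hsorted i j hij hjn]) hi,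
      div_lt_iff₀ htD, sub_mul, one_mul, lt_sub_iff_add_lt, add_comm]
  have hsplit : (List.range n).map q =
      (List.range k).map q ++ ((List.range (n - k)).map (k + ·)).map q := by
    rw [← List.map_append, ← List.range_add, Nat.add_sub_cancel' hkn]
  have hnonneg : ∀ a ∈ (List.range n).map q, 0 ≤ a := by
    simpa using fun i hi => (hq i hi).1
  rw [hsplit, List.forall_mem_append] at hnonneg
  have hfast : ∀ a ∈ (List.range k).map q, tV + a * tD ≤ tD := by
    simpa using fun i hi => ((hthreshold i (by omega)).1 hi).le
  have hslow : ∀ a ∈ ((List.range (n - k)).map (k + ·)).map q, tD ≤ tV + a * tD := by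
    simpa using fun i hi => not_lt.1 fun h => by
      have := (hthreshold (k + i) (by omega)).2 h
      omega
  refine ⟨expDur_le_of_forall_mem hnonneg.1 hfast, ?_⟩
  rw [hsplit, expDur_append_s11]
  exact expDur_le_expDur_of_le (le_expDur_of_forall_mem hnonneg.2 hslow) hnonneg.1

/-- The threshold strategy (verify the `k` boxes with acceptance probability exceeding
`t_V / t_D`, then draw) is at least as fast as the drawing-only strategy `D` and as the
exhaustive verification strategy `VⁿD`. -/
theorem iadProb_le_standard (tV tD : ℝ) (htV : 0 ≤ tV) (htVD : tV ≤ tD) (htD : 0 < tD)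
    (n : ℕ) (q : ℕ → ℝ)
    (hq : ∀ i < n, 0 ≤ q i ∧ q i ≤ 1)
    (hsorted : ∀ i j, i ≤ j → j < n → q i ≤ q j)
    (k : ℕ) (hk : k = ((Finset.range n).filter fun i => tV / tD < 1 - q i).card) :
    expDur tV tD ((List.range k).map q) ≤ tD ∧
    expDur tV tD ((List.range k).map q) ≤ expDur tV tD ((List.range n).map q) :=
  iadProb_le_standard_general tV tD htD n q hq hsorted k hk
end
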